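/- For any bipartite graph G = (L, R, E) with n ≥ 2 vertices and any edge e = (u, v) ∉ E, the total change in the set of maximal bicliques satisfies |Υ(G, G+e)| ≤ 3·g(n−2). -/

import Mathlib

/-- `(X, Y)` is a biclique of the bipartite graph with parts `L`, `R` and edge set `E`:
`X ⊆ L`, `Y ⊆ R`, and every vertex of `X` is joined to every vertex of `Y`. -/
def IsBiclique {V : Type*} (L R : Finset V) (E : Finset (V × V))
    (B : Finset V × Finset V) : Prop :=
  B.1 ⊆ L ∧ B.2 ⊆ R ∧ ∀ x ∈ B.1, ∀ y ∈ B.2, (x, y) ∈ E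

/-- `(X, Y)` is a maximal biclique: it is a biclique, and no other biclique contains it
componentwise. -/
def IsMaximalBiclique {V : Type*} (L R : Finset V) (E : Finset (V × V))
    (B : Finset V × Finset V) : Prop :=
  IsBiclique L R E B ∧
    ∀ B' : Finset V × Finset V, IsBiclique L R E B' → B.1 ⊆ B'.1 → B.2 ⊆ B'.2 → B' = B

/-- `BC L R E` is the set of maximal bicliques of the bipartite graph `(L, R, E)`. -/
def BC {V : Type*} (L R : Finset V) (E : Finset (V × V)) : Set (Finset V × Finset V) :=
  {B | IsMaximalBiclique L R E B}

/-- `g m` is the maximum number of maximal bicliques over all bipartite graphs with `m`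
vertices. -/
noncomputable def g (m : ℕ) : ℕ :=
  sSup {k : ℕ | ∃ (W : Type) (L R : Finset W) (E : Finset (W × W)),
    Disjoint L R ∧ E ⊆ L ×ˢ R ∧ L.card + R.card = m ∧ (BC L R E).ncard = k}

section Helpers

variable {V : Type*}

lemma bc_subset (L R : Finset V) (E : Finset (V × V)) :
    BC L R E ⊆ ↑(L.powerset ×ˢ R.powerset) := by
  rintro ⟨X, Y⟩ ⟨⟨hX, hY, -⟩, -⟩
  simp only [Finset.coe_product, Set.mem_prod, Finset.mem_coe, Finset.mem_powerset]
  exact ⟨hX, hY⟩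

lemma bc_finite (L R : Finset V) (E : Finset (V × V)) : (BC L R E).Finite :=
  Set.Finite.subset (L.powerset ×ˢ R.powerset).finite_toSet (bc_subset L R E)

/-- Generic injection lemma: bicliques of `(L,R,F)` containing fixed parts `X0 ⊆ X`,
`Y0 ⊆ Y` inject into maximal bicliques of a suitable smaller graph by deleting `X0, Y0`. -/
lemma generic_inj [DecidableEq V] (L R L2 R2 : Finset V) (F F2 : Finset (V × V))
    (X0 Y0 : Finset V) (S : Set (Finset V × Finset V))
    (hS : ∀ B ∈ S, IsMaximalBiclique L R F B ∧ X0 ⊆ B.1 ∧ Y0 ⊆ B.2 ∧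
        IsBiclique L2 R2 F2 (B.1 \ X0, B.2 \ Y0))
    (hlift : ∀ X' Y', IsBiclique L2 R2 F2 (X', Y') →
        IsBiclique L R F (X' ∪ X0, Y' ∪ Y0))
    (hX0 : Disjoint X0 L2) (hY0 : Disjoint Y0 R2) :
    S.ncard ≤ (BC L2 R2 F2).ncard := by
  refine Set.ncard_le_ncard_of_injOn (fun B => (B.1 \ X0, B.2 \ Y0)) ?_ ?_ (bc_finite _ _ _)
  · intro B hB
    obtain ⟨⟨hbic, hmax⟩, hX, hY, him⟩ := hS B hB
    refine ⟨him, ?_⟩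
    rintro ⟨X', Y'⟩ hb' h1 h2
    have hXd : Disjoint X' X0 := (hX0.mono_right hb'.1).symm
    have hYd : Disjoint Y' Y0 := (hY0.mono_right hb'.2.1).symm
    have heq := hmax (X' ∪ X0, Y' ∪ Y0) (hlift X' Y' hb')
      (by
        intro x hx
        by_cases hx0 : x ∈ X0
        · exact Finset.mem_union_right _ hx0
        · exact Finset.mem_union_left _ (h1 (Finset.mem_sdiff.mpr ⟨hx, hx0⟩)))
      (by
        intro y hy
        by_cases hy0 : y ∈ Y0
        · exact Finset.mem_union_right _ hy0
        · exact Finset.mem_union_left _ (h2 (Finset.mem_sdiff.mpr ⟨hy, hy0⟩)))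
    have h1' : X' ∪ X0 = B.1 := congrArg Prod.fst heq
    have h2' : Y' ∪ Y0 = B.2 := congrArg Prod.snd heq
    have e1 : X' = B.1 \ X0 := by
      ext x
      constructor
      · intro hx
        rw [← h1']
        exact Finset.mem_sdiff.mpr ⟨Finset.mem_union_left _ hx,
          Finset.disjoint_left.mp hXd hx⟩
      · intro hx
        obtain ⟨hx1, hx0⟩ := Finset.mem_sdiff.mp hx
        rw [← h1'] at hx1
        rcases Finset.mem_union.mp hx1 with h | h
        · exact h
        · exact absurd h hx0
    have e2 : Y' = B.2 \ Y0 := by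
      ext y
      constructor
      · intro hy
        rw [← h2']
        exact Finset.mem_sdiff.mpr ⟨Finset.mem_union_left _ hy,
          Finset.disjoint_left.mp hYd hy⟩
      · intro hy
        obtain ⟨hy1, hy0⟩ := Finset.mem_sdiff.mp hy
        rw [← h2'] at hy1
        rcases Finset.mem_union.mp hy1 with h | h
        · exact h
        · exact absurd h hy0
    exact Prod.ext e1 e2
  · intro B hB B' hB' heq
    obtain ⟨-, hX, hY, -⟩ := hS B hB
    obtain ⟨-, hX', hY', -⟩ := hS B' hB'
    have h1 : B.1 \ X0 = B'.1 \ X0 := congrArg Prod.fst heq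
    have h2 : B.2 \ Y0 = B'.2 \ Y0 := congrArg Prod.snd heq
    have e1 : B.1 = B'.1 := by
      rw [← Finset.sdiff_union_of_subset hX, h1, Finset.sdiff_union_of_subset hX']
    have e2 : B.2 = B'.2 := by
      rw [← Finset.sdiff_union_of_subset hY, h2, Finset.sdiff_union_of_subset hY']
    exact Prod.ext e1 e2

/-- Relabelling the vertices along a map injective on `L ∪ R` does not decrease
the number of maximal bicliques. -/
lemma bc_image_le [DecidableEq V] {W : Type*} [DecidableEq W] (L R : Finset V)
    (E : Finset (V × V)) (hE : E ⊆ L ×ˢ R) (φ : V → W)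
    (hφ : Set.InjOn φ ↑(L ∪ R)) :
    (BC L R E).ncard ≤
      (BC (L.image φ) (R.image φ) (E.image (Prod.map φ φ))).ncard := by
  have memLR : ∀ x ∈ L, (x : V) ∈ (↑(L ∪ R) : Set V) := by
    intro x hx; exact Finset.mem_coe.mpr (Finset.mem_union_left _ hx)
  have memLR' : ∀ x ∈ R, (x : V) ∈ (↑(L ∪ R) : Set V) := by
    intro x hx; exact Finset.mem_coe.mpr (Finset.mem_union_right _ hx)
  have cancel : ∀ {X X' : Finset V}, X ⊆ L ∪ R → X' ⊆ L ∪ R →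
      X.image φ = X'.image φ → X = X' := by
    intro X X' hXs hX's h
    ext x
    constructor
    · intro hx
      have : φ x ∈ X'.image φ := h ▸ Finset.mem_image_of_mem φ hx
      obtain ⟨x', hx', hxe⟩ := Finset.mem_image.mp this
      have : x' = x := hφ (Finset.mem_coe.mpr (hX's hx')) (Finset.mem_coe.mpr (hXs hx)) hxe
      exact this ▸ hx'
    · intro hx
      have : φ x ∈ X.image φ := h ▸ Finset.mem_image_of_mem φ hx
      obtain ⟨x', hx', hxe⟩ := Finset.mem_image.mp this
      have : x' = x := hφ (Finset.mem_coe.mpr (hXs hx')) (Finset.mem_coe.mpr (hX's hx)) hxe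
      exact this ▸ hx'
  refine Set.ncard_le_ncard_of_injOn (fun B => (B.1.image φ, B.2.image φ)) ?_ ?_
    (bc_finite _ _ _)
  · rintro ⟨X, Y⟩ ⟨⟨hX, hY, hedge⟩, hmax⟩
    constructor
    · refine ⟨Finset.image_subset_image hX, Finset.image_subset_image hY, ?_⟩
      intro a ha b hb
      obtain ⟨x, hx, rfl⟩ := Finset.mem_image.mp ha
      obtain ⟨y, hy, rfl⟩ := Finset.mem_image.mp hb
      exact Finset.mem_image.mpr ⟨(x, y), hedge x hx y hy, rfl⟩
    · rintro ⟨X', Y'⟩ ⟨hX', hY', hedge'⟩ h1 h2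
      have hb0 : IsBiclique L R E (L.filter (fun x => φ x ∈ X'), R.filter (fun y => φ y ∈ Y')) := by
        refine ⟨Finset.filter_subset _ _, Finset.filter_subset _ _, ?_⟩
        intro x hx y hy
        obtain ⟨hxL, hxφ⟩ := Finset.mem_filter.mp hx
        obtain ⟨hyR, hyφ⟩ := Finset.mem_filter.mp hy
        obtain ⟨⟨x₁, y₁⟩, hmem, heqp⟩ := Finset.mem_image.mp (hedge' _ hxφ _ hyφ)
        have hx₁ : x₁ ∈ L := (Finset.mem_product.mp (hE hmem)).1
        have hy₁ : y₁ ∈ R := (Finset.mem_product.mp (hE hmem)).2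
        have ex : x₁ = x := hφ (memLR _ hx₁) (memLR _ hxL) (congrArg Prod.fst heqp)
        have ey : y₁ = y := hφ (memLR' _ hy₁) (memLR' _ hyR) (congrArg Prod.snd heqp)
        rw [← ex, ← ey]
        exact hmem
      have heq0 := hmax _ hb0
        (by
          intro x hx
          exact Finset.mem_filter.mpr ⟨hX hx, h1 (Finset.mem_image_of_mem φ hx)⟩)
        (by
          intro y hy
          exact Finset.mem_filter.mpr ⟨hY hy, h2 (Finset.mem_image_of_mem φ hy)⟩)
      have heqX : L.filter (fun x => φ x ∈ X') = X := congrArg Prod.fst heq0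
      have heqY : R.filter (fun y => φ y ∈ Y') = Y := congrArg Prod.snd heq0
      have e1 : X' = X.image φ := by
        apply Finset.Subset.antisymm _ h1
        intro a ha
        obtain ⟨x, hx, rfl⟩ := Finset.mem_image.mp (hX' ha)
        have : x ∈ X := heqX ▸ Finset.mem_filter.mpr ⟨hx, ha⟩
        exact Finset.mem_image_of_mem φ this
      have e2 : Y' = Y.image φ := by
        apply Finset.Subset.antisymm _ h2
        intro a ha
        obtain ⟨y, hy, rfl⟩ := Finset.mem_image.mp (hY' ha)
        have : y ∈ Y := heqY ▸ Finset.mem_filter.mpr ⟨hy, ha⟩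
        exact Finset.mem_image_of_mem φ this
      exact Prod.ext e1 e2
  · rintro ⟨X, Y⟩ ⟨⟨hX, hY, -⟩, -⟩ ⟨X', Y'⟩ ⟨⟨hX', hY', -⟩, -⟩ heq
    have h1 : X.image φ = X'.image φ := congrArg Prod.fst heq
    have h2 : Y.image φ = Y'.image φ := congrArg Prod.snd heq
    exact Prod.ext
      (cancel (hX.trans Finset.subset_union_left) (hX'.trans Finset.subset_union_left) h1)
      (cancel (hY.trans Finset.subset_union_right) (hY'.trans Finset.subset_union_right) h2)

/-- Adding isolated vertices to the left side does not decrease the number of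
maximal bicliques. -/
lemma bc_pad_le [DecidableEq V] (L R P : Finset V) (E : Finset (V × V))
    (hE : E ⊆ L ×ˢ R) :
    (BC L R E).ncard ≤ (BC (L ∪ P) R E).ncard := by
  refine Set.ncard_le_ncard_of_injOn
    (fun B => if B.2 = ∅ then (L ∪ P, (∅ : Finset V)) else B) ?_ ?_ (bc_finite _ _ _)
  · rintro ⟨X, Y⟩ ⟨⟨hX, hY, hedge⟩, hmax⟩
    by_cases hYe : Y = ∅
    · have hred : (fun B : Finset V × Finset V =>
          if B.2 = ∅ then (L ∪ P, (∅ : Finset V)) else B) (X, Y) = (L ∪ P, ∅) := by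
        simp [hYe]
      rw [show (if (X, Y).2 = ∅ then (L ∪ P, (∅ : Finset V)) else (X, Y)) = (L ∪ P, ∅) from hred]
      refine ⟨⟨subset_rfl, Finset.empty_subset _,
        fun x _ y hy => absurd hy (Finset.notMem_empty y)⟩, ?_⟩
      rintro ⟨X', Y'⟩ ⟨hX', hY', hedge'⟩ h1 h2
      have hX'eq : X' = L ∪ P := Finset.Subset.antisymm hX' h1
      have hb : IsBiclique L R E (L, Y') :=
        ⟨subset_rfl, hY', fun x hx y hy =>
          hedge' x (h1 (Finset.mem_union_left _ hx)) y hy⟩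
      have hme := hmax (L, Y') hb hX (by simp [hYe])
      have hY'e : Y' = ∅ := (congrArg Prod.snd hme).trans hYe
      exact Prod.ext hX'eq hY'e
    · have hred : (fun B : Finset V × Finset V =>
          if B.2 = ∅ then (L ∪ P, (∅ : Finset V)) else B) (X, Y) = (X, Y) := by
        simp [hYe]
      rw [show (if (X, Y).2 = ∅ then (L ∪ P, (∅ : Finset V)) else (X, Y)) = (X, Y) from hred]
      refine ⟨⟨hX.trans Finset.subset_union_left, hY, hedge⟩, ?_⟩
      rintro ⟨X', Y'⟩ ⟨hX', hY', hedge'⟩ h1 h2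
      obtain ⟨y, hy⟩ := Finset.nonempty_iff_ne_empty.mpr hYe
      have hX'L : X' ⊆ L := by
        intro x hx
        exact (Finset.mem_product.mp (hE (hedge' x hx y (h2 hy)))).1
      exact hmax (X', Y') ⟨hX'L, hY', hedge'⟩ h1 h2
  · rintro ⟨X, Y⟩ hB ⟨X', Y'⟩ hB' heq
    have hXL : Y = ∅ → X = L := by
      intro hYe
      subst hYe
      have := hB.2 (L, ∅) ⟨subset_rfl, Finset.empty_subset _,
        fun x _ y hy => absurd hy (Finset.notMem_empty y)⟩ hB.1.1 (Finset.empty_subset _)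
      exact (congrArg Prod.fst this).symm
    have hX'L : Y' = ∅ → X' = L := by
      intro hYe
      subst hYe
      have := hB'.2 (L, ∅) ⟨subset_rfl, Finset.empty_subset _,
        fun x _ y hy => absurd hy (Finset.notMem_empty y)⟩ hB'.1.1 (Finset.empty_subset _)
      exact (congrArg Prod.fst this).symm
    have heq' : (if Y = ∅ then (L ∪ P, (∅ : Finset V)) else (X, Y)) =
        (if Y' = ∅ then (L ∪ P, (∅ : Finset V)) else (X', Y')) := heq
    by_cases h1 : Y = ∅ <;> by_cases h2 : Y' = ∅
    · rw [hXL h1, hX'L h2, h1, h2]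
    · rw [if_pos h1, if_neg h2] at heq'
      exact absurd (congrArg Prod.snd heq').symm h2
    · rw [if_neg h1, if_pos h2] at heq'
      exact absurd (congrArg Prod.snd heq') h1
    · rwa [if_neg h1, if_neg h2] at heq'

/-- Any bipartite graph on at most `m` vertices has at most `g m` maximal bicliques. -/
lemma ncard_BC_le_g [DecidableEq V] (L R : Finset V) (E : Finset (V × V))
    (hdisj : Disjoint L R) (hE : E ⊆ L ×ˢ R) (m : ℕ) (hm : L.card + R.card ≤ m) :
    (BC L R E).ncard ≤ g m := by
  classical
  set c := (L ∪ R).card with hc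
  have hcard : c = L.card + R.card := Finset.card_union_of_disjoint hdisj
  let e : ↥(L ∪ R) ≃ Fin c := Fintype.equivFinOfCardEq (Fintype.card_coe _)
  let φ : V → ℕ := fun x => if h : x ∈ L ∪ R then (e ⟨x, h⟩ : ℕ) else 0
  have hφval : ∀ x (h : x ∈ L ∪ R), φ x = (e ⟨x, h⟩ : ℕ) := by
    intro x h; simp only [φ, dif_pos h]
  have hφinj : Set.InjOn φ ↑(L ∪ R) := by
    intro x hx y hy hxy
    have hx' : x ∈ L ∪ R := Finset.mem_coe.mp hx
    have hy' : y ∈ L ∪ R := Finset.mem_coe.mp hy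
    rw [hφval x hx', hφval y hy'] at hxy
    have := e.injective (Fin.val_injective hxy)
    exact Subtype.ext_iff.mp this
  have hφlt : ∀ x ∈ L ∪ R, φ x < c := by
    intro x hx
    rw [hφval x hx]
    exact (e ⟨x, hx⟩).2
  set L' := L.image φ with hL'
  set R' := R.image φ with hR'
  set E' := E.image (Prod.map φ φ) with hE'
  set P := Finset.Ico c m with hP
  have hL'range : ∀ a ∈ L', a < c := by
    intro a ha
    obtain ⟨x, hx, rfl⟩ := Finset.mem_image.mp ha
    exact hφlt x (Finset.mem_union_left _ hx)
  have hR'range : ∀ a ∈ R', a < c := by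
    intro a ha
    obtain ⟨x, hx, rfl⟩ := Finset.mem_image.mp ha
    exact hφlt x (Finset.mem_union_right _ hx)
  have hdisj' : Disjoint L' R' := by
    rw [Finset.disjoint_left]
    intro a haL haR
    obtain ⟨x, hx, rfl⟩ := Finset.mem_image.mp haL
    obtain ⟨y, hy, hyx⟩ := Finset.mem_image.mp haR
    have : y = x := hφinj (Finset.mem_coe.mpr (Finset.mem_union_right _ hy))
      (Finset.mem_coe.mpr (Finset.mem_union_left _ hx)) hyx
    exact Finset.disjoint_left.mp hdisj hx (this ▸ hy)
  have hPdisjL' : Disjoint L' P := by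
    rw [Finset.disjoint_left]
    intro a haL haP
    exact absurd (hL'range a haL) (not_lt.mpr (Finset.mem_Ico.mp haP).1)
  have hPdisjR' : Disjoint P R' := by
    rw [Finset.disjoint_left]
    intro a haP haR
    exact absurd (hR'range a haR) (not_lt.mpr (Finset.mem_Ico.mp haP).1)
  have hE'sub : E' ⊆ L' ×ˢ R' := by
    intro p hp
    obtain ⟨⟨x, y⟩, hmem, rfl⟩ := Finset.mem_image.mp hp
    obtain ⟨hx, hy⟩ := Finset.mem_product.mp (hE hmem)
    exact Finset.mem_product.mpr
      ⟨Finset.mem_image_of_mem φ hx, Finset.mem_image_of_mem φ hy⟩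
  have hcardL' : L'.card = L.card :=
    Finset.card_image_of_injOn (hφinj.mono (by
      intro x hx
      exact Finset.mem_coe.mpr (Finset.mem_union_left _ (Finset.mem_coe.mp hx))))
  have hcardR' : R'.card = R.card :=
    Finset.card_image_of_injOn (hφinj.mono (by
      intro x hx
      exact Finset.mem_coe.mpr (Finset.mem_union_right _ (Finset.mem_coe.mp hx))))
  have hcardLP : (L' ∪ P).card = L.card + (m - c) := by
    rw [Finset.card_union_of_disjoint hPdisjL', hcardL', hP, Nat.card_Ico]
  have hcount : (L' ∪ P).card + R'.card = m := by
    rw [hcardLP, hcardR']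
    omega
  have hdisjLP : Disjoint (L' ∪ P) R' := Finset.disjoint_union_left.mpr ⟨hdisj', hPdisjR'⟩
  have hE'sub' : E' ⊆ (L' ∪ P) ×ˢ R' :=
    hE'sub.trans (Finset.product_subset_product_left Finset.subset_union_left)
  have hmem : (BC (L' ∪ P) R' E').ncard ∈ {k : ℕ | ∃ (W : Type) (L R : Finset W)
      (E : Finset (W × W)), Disjoint L R ∧ E ⊆ L ×ˢ R ∧ L.card + R.card = m ∧
      (BC L R E).ncard = k} :=
    ⟨ℕ, L' ∪ P, R', E', hdisjLP, hE'sub', hcount, rfl⟩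
  have hbdd : BddAbove {k : ℕ | ∃ (W : Type) (L R : Finset W) (E : Finset (W × W)),
      Disjoint L R ∧ E ⊆ L ×ˢ R ∧ L.card + R.card = m ∧ (BC L R E).ncard = k} := by
    refine ⟨2 ^ m, ?_⟩
    rintro k ⟨W, L₀, R₀, E₀, hd₀, hE₀, hc₀, rfl⟩
    calc (BC L₀ R₀ E₀).ncard ≤ ((L₀.powerset ×ˢ R₀.powerset : Finset _) : Set _).ncard :=
          Set.ncard_le_ncard (bc_subset _ _ _) (Finset.finite_toSet _)
      _ = (L₀.powerset ×ˢ R₀.powerset).card := Set.ncard_coe_finset _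
      _ = 2 ^ L₀.card * 2 ^ R₀.card := by
          rw [Finset.card_product, Finset.card_powerset, Finset.card_powerset]
      _ = 2 ^ m := by rw [← pow_add, hc₀]
  calc (BC L R E).ncard ≤ (BC L' R' E').ncard := bc_image_le L R E hE φ hφinj
    _ ≤ (BC (L' ∪ P) R' E').ncard := bc_pad_le L' R' P E' hE'sub
    _ ≤ g m := le_csSup hbdd hmem

end Helpers

set_option maxHeartbeats 1000000 in
/-- For a bipartite graph `G` on `n ≥ 2` vertices and any edge `e = (u, v) ∉ E`, the total
change `|Υ(G, G+e)|` in the set of maximal bicliques is at most `3·g(n-2)`. -/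
theorem stmt10 {V : Type*} [DecidableEq V] (L R : Finset V) (E : Finset (V × V))
    (hdisj : Disjoint L R) (hE : E ⊆ L ×ˢ R) (hn : 2 ≤ L.card + R.card)
    (u v : V) (hu : u ∈ L) (hv : v ∈ R) (he : (u, v) ∉ E) :
    ((BC L R (E ∪ {(u, v)}) \ BC L R E) ∪
      (BC L R E \ BC L R (E ∪ {(u, v)}))).ncard ≤ 3 * g (L.card + R.card - 2) := by
  classical
  set E' : Finset (V × V) := E ∪ {(u, v)} with hE'def
  have hmemE' : ∀ x y, (x, y) ∈ E' ↔ (x, y) ∈ E ∨ (x = u ∧ y = v) := by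
    intro x y
    simp [hE'def, Prod.ext_iff, or_comm]
  have hEsub : E ⊆ E' := Finset.subset_union_left
  set Υ := (BC L R E' \ BC L R E) ∪ (BC L R E \ BC L R E') with hΥ
  -- every changed biclique contains u or v
  have cover : ∀ B ∈ Υ, u ∈ B.1 ∨ v ∈ B.2 := by
    rintro ⟨X, Y⟩ hB
    by_contra hcon
    push_neg at hcon
    obtain ⟨hXu, hYv⟩ := hcon
    have hbic_iff : IsBiclique L R E (X, Y) ↔ IsBiclique L R E' (X, Y) := by
      constructor
      · rintro ⟨h1, h2, h3⟩
        exact ⟨h1, h2, fun x hx y hy => hEsub (h3 x hx y hy)⟩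
      · rintro ⟨h1, h2, h3⟩
        refine ⟨h1, h2, fun x hx y hy => ?_⟩
        rcases (hmemE' x y).mp (h3 x hx y hy) with h | ⟨rfl, rfl⟩
        · exact h
        · exact absurd hx hXu
    have hiff : (X, Y) ∈ BC L R E ↔ (X, Y) ∈ BC L R E' := by
      constructor
      · rintro ⟨hb, hmax⟩
        refine ⟨hbic_iff.mp hb, ?_⟩
        rintro ⟨X', Y'⟩ ⟨h1, h2, h3⟩ hs1 hs2
        by_cases huv : u ∈ X' ∧ v ∈ Y'
        · exfalso
          have hb2 : IsBiclique L R E (X'.erase u, Y') := by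
            refine ⟨(Finset.erase_subset _ _).trans h1, h2, ?_⟩
            intro x hx y hy
            rcases (hmemE' x y).mp (h3 x (Finset.mem_of_mem_erase hx) y hy) with h | ⟨rfl, rfl⟩
            · exact h
            · exact absurd hx (Finset.notMem_erase _ _)
          have heq := hmax (X'.erase u, Y') hb2
            (fun x hx => Finset.mem_erase.mpr ⟨fun h => hXu (h ▸ hx), hs1 hx⟩) hs2
          have : Y' = Y := congrArg Prod.snd heq
          exact hYv (this ▸ huv.2)
        · have hb2 : IsBiclique L R E (X', Y') := by
            refine ⟨h1, h2, fun x hx y hy => ?_⟩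
            rcases (hmemE' x y).mp (h3 x hx y hy) with h | ⟨rfl, rfl⟩
            · exact h
            · exact absurd ⟨hx, hy⟩ huv
          exact hmax (X', Y') hb2 hs1 hs2
      · rintro ⟨hb, hmax⟩
        refine ⟨hbic_iff.mpr hb, ?_⟩
        rintro B' hb' hs1 hs2
        exact hmax B' ⟨hb'.1, hb'.2.1, fun x hx y hy => hEsub (hb'.2.2 x hx y hy)⟩ hs1 hs2
    rcases hB with ⟨h1, h2⟩ | ⟨h1, h2⟩
    · exact h2 (hiff.mpr h1)
    · exact h2 (hiff.mp h1)
  -- a changed biclique avoiding v is maximal in E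
  have classE : ∀ B ∈ Υ, v ∉ B.2 → B ∈ BC L R E := by
    rintro ⟨X, Y⟩ hB hYv
    rcases hB with ⟨h1, h2⟩ | ⟨h1, h2⟩
    · exfalso
      obtain ⟨⟨hb1, hb2, hb3⟩, hmax⟩ := h1
      apply h2
      refine ⟨⟨hb1, hb2, fun x hx y hy => ?_⟩, ?_⟩
      · rcases (hmemE' x y).mp (hb3 x hx y hy) with h | ⟨rfl, rfl⟩
        · exact h
        · exact absurd hy hYv
      · rintro B' hb' hs1 hs2
        exact hmax B' ⟨hb'.1, hb'.2.1, fun x hx y hy => hEsub (hb'.2.2 x hx y hy)⟩ hs1 hs2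
    · exact h1
  -- a changed biclique avoiding u is maximal in E
  have classE2 : ∀ B ∈ Υ, u ∉ B.1 → B ∈ BC L R E := by
    rintro ⟨X, Y⟩ hB hXu
    rcases hB with ⟨h1, h2⟩ | ⟨h1, h2⟩
    · exfalso
      obtain ⟨⟨hb1, hb2, hb3⟩, hmax⟩ := h1
      apply h2
      refine ⟨⟨hb1, hb2, fun x hx y hy => ?_⟩, ?_⟩
      · rcases (hmemE' x y).mp (hb3 x hx y hy) with h | ⟨rfl, rfl⟩
        · exact h
        · exact absurd hx hXu
      · rintro B' hb' hs1 hs2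
        exact hmax B' ⟨hb'.1, hb'.2.1, fun x hx y hy => hEsub (hb'.2.2 x hx y hy)⟩ hs1 hs2
    · exact h1
  -- a changed biclique containing both u and v is maximal in E'
  have classE' : ∀ B ∈ Υ, u ∈ B.1 → v ∈ B.2 → B ∈ BC L R E' := by
    rintro ⟨X, Y⟩ hB hXu hYv
    rcases hB with ⟨h1, h2⟩ | ⟨h1, h2⟩
    · exact h1
    · exact absurd (h1.1.2.2 u hXu v hYv) he
  set Nv : Finset V := L.filter (fun x => (x, v) ∈ E) with hNv
  set Nu : Finset V := R.filter (fun y => (u, y) ∈ E) with hNu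
  have hNvL : Nv ⊆ L := Finset.filter_subset _ _
  have hNuR : Nu ⊆ R := Finset.filter_subset _ _
  have huNv : u ∉ Nv := by
    simp only [hNv, Finset.mem_filter]
    rintro ⟨-, h⟩
    exact he h
  have hvNu : v ∉ Nu := by
    simp only [hNu, Finset.mem_filter]
    rintro ⟨-, h⟩
    exact he h
  have hLpos : 1 ≤ L.card := Finset.card_pos.mpr ⟨u, hu⟩
  have hRpos : 1 ≤ R.card := Finset.card_pos.mpr ⟨v, hv⟩
  have hNvcard : Nv.card ≤ L.card - 1 := by
    have : Nv ⊆ L.erase u := Finset.subset_erase.mpr ⟨hNvL, huNv⟩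
    have := Finset.card_le_card this
    rwa [Finset.card_erase_of_mem hu] at this
  have hNucard : Nu.card ≤ R.card - 1 := by
    have : Nu ⊆ R.erase v := Finset.subset_erase.mpr ⟨hNuR, hvNu⟩
    have := Finset.card_le_card this
    rwa [Finset.card_erase_of_mem hv] at this
  set S1 := {B ∈ Υ | u ∈ B.1 ∧ v ∈ B.2} with hS1
  set S2 := {B ∈ Υ | u ∈ B.1 ∧ v ∉ B.2} with hS2
  set S3 := {B ∈ Υ | u ∉ B.1 ∧ v ∈ B.2} with hS3
  have hΥfin : Υ.Finite :=
    Set.Finite.subset ((bc_finite L R E').union (bc_finite L R E))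
      (Set.union_subset (Set.diff_subset.trans Set.subset_union_left)
        (Set.diff_subset.trans Set.subset_union_right))
  have hcover : Υ ⊆ S1 ∪ S2 ∪ S3 := by
    intro B hB
    by_cases h1 : u ∈ B.1
    · by_cases h2 : v ∈ B.2
      · exact Set.mem_union_left _ (Set.mem_union_left _ ⟨hB, h1, h2⟩)
      · exact Set.mem_union_left _ (Set.mem_union_right _ ⟨hB, h1, h2⟩)
    · rcases cover B hB with h | h
      · exact absurd h h1
      · exact Set.mem_union_right _ ⟨hB, h1, h⟩
  -- bound for S1
  have hb1 : S1.ncard ≤ g (L.card + R.card - 2) := by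
    have hinj : S1.ncard ≤ (BC Nv Nu (E.filter (fun p => p.1 ∈ Nv ∧ p.2 ∈ Nu))).ncard := by
      apply generic_inj L R Nv Nu E' _ {u} {v}
      · rintro ⟨X, Y⟩ hB
        obtain ⟨hΥm, hXu, hYv⟩ := hB
        have hmaxB : IsMaximalBiclique L R E' (X, Y) := classE' _ hΥm hXu hYv
        obtain ⟨⟨hbX, hbY, hbe⟩, -⟩ := hmaxB
        have hsubX : X \ {u} ⊆ Nv := by
          intro x hx
          obtain ⟨hx1, hx2⟩ := Finset.mem_sdiff.mp hx
          rw [Finset.mem_singleton] at hx2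
          refine Finset.mem_filter.mpr ⟨hbX hx1, ?_⟩
          rcases (hmemE' x v).mp (hbe x hx1 v hYv) with h | ⟨rfl, -⟩
          · exact h
          · exact absurd rfl hx2
        have hsubY : Y \ {v} ⊆ Nu := by
          intro y hy
          obtain ⟨hy1, hy2⟩ := Finset.mem_sdiff.mp hy
          rw [Finset.mem_singleton] at hy2
          refine Finset.mem_filter.mpr ⟨hbY hy1, ?_⟩
          rcases (hmemE' u y).mp (hbe u hXu y hy1) with h | ⟨-, rfl⟩
          · exact h
          · exact absurd rfl hy2
        refine ⟨classE' _ hΥm hXu hYv, Finset.singleton_subset_iff.mpr hXu,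
          Finset.singleton_subset_iff.mpr hYv, hsubX, hsubY, ?_⟩
        intro x hx y hy
        obtain ⟨hx1, hx2⟩ := Finset.mem_sdiff.mp hx
        rw [Finset.mem_singleton] at hx2
        refine Finset.mem_filter.mpr ⟨?_, hsubX hx, hsubY hy⟩
        rcases (hmemE' x y).mp (hbe x hx1 y (Finset.mem_sdiff.mp hy).1) with h | ⟨rfl, -⟩
        · exact h
        · exact absurd rfl hx2
      · rintro X' Y' ⟨h1, h2, h3⟩
        refine ⟨Finset.union_subset (h1.trans hNvL) (Finset.singleton_subset_iff.mpr hu),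
          Finset.union_subset (h2.trans hNuR) (Finset.singleton_subset_iff.mpr hv), ?_⟩
        intro x hx y hy
        rcases Finset.mem_union.mp hx with hx' | hx'
        · rcases Finset.mem_union.mp hy with hy' | hy'
          · exact hEsub (Finset.mem_filter.mp (h3 x hx' y hy')).1
          · rw [Finset.mem_singleton.mp hy']
            exact hEsub (Finset.mem_filter.mp (h1 hx')).2
        · rw [Finset.mem_singleton.mp hx']
          rcases Finset.mem_union.mp hy with hy' | hy'
          · exact hEsub (Finset.mem_filter.mp (h2 hy')).2
          · rw [Finset.mem_singleton.mp hy']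
            exact (hmemE' u v).mpr (Or.inr ⟨rfl, rfl⟩)
      · exact Finset.disjoint_singleton_left.mpr huNv
      · exact Finset.disjoint_singleton_left.mpr hvNu
    refine hinj.trans (ncard_BC_le_g Nv Nu _ (hdisj.mono hNvL hNuR) ?_ _ ?_)
    · intro p hp
      obtain ⟨-, h1, h2⟩ := Finset.mem_filter.mp hp
      exact Finset.mem_product.mpr ⟨h1, h2⟩
    · omega
  -- bound for S2
  have hb2 : S2.ncard ≤ g (L.card + R.card - 2) := by
    have hinj : S2.ncard ≤
        (BC (L.erase u) Nu (E.filter (fun p => p.1 ∈ L.erase u ∧ p.2 ∈ Nu))).ncard := by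
      apply generic_inj L R (L.erase u) Nu E _ {u} ∅
      · rintro ⟨X, Y⟩ hB
        obtain ⟨hΥm, hXu, hYv⟩ := hB
        have hmaxB : IsMaximalBiclique L R E (X, Y) := classE _ hΥm hYv
        obtain ⟨⟨hbX, hbY, hbe⟩, -⟩ := hmaxB
        have hsubX : X \ {u} ⊆ L.erase u := by
          intro x hx
          obtain ⟨hx1, hx2⟩ := Finset.mem_sdiff.mp hx
          rw [Finset.mem_singleton] at hx2
          exact Finset.mem_erase.mpr ⟨hx2, hbX hx1⟩
        have hsubY : Y \ ∅ ⊆ Nu := by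
          intro y hy
          rw [Finset.sdiff_empty] at hy
          exact Finset.mem_filter.mpr ⟨hbY hy, hbe u hXu y hy⟩
        refine ⟨classE _ hΥm hYv, Finset.singleton_subset_iff.mpr hXu,
          Finset.empty_subset _, hsubX, hsubY, ?_⟩
        intro x hx y hy
        have hy' : y ∈ Y := by rw [Finset.sdiff_empty] at hy; exact hy
        exact Finset.mem_filter.mpr
          ⟨hbe x (Finset.mem_sdiff.mp hx).1 y hy', hsubX hx, hsubY hy⟩
      · rintro X' Y' ⟨h1, h2, h3⟩
        refine ⟨Finset.union_subset (h1.trans (Finset.erase_subset _ _))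
          (Finset.singleton_subset_iff.mpr hu),
          Finset.union_subset (h2.trans hNuR) (Finset.empty_subset _), ?_⟩
        intro x hx y hy
        have hy' : y ∈ Y' := by
          rcases Finset.mem_union.mp hy with h | h
          · exact h
          · exact absurd h (Finset.notMem_empty y)
        rcases Finset.mem_union.mp hx with hx' | hx'
        · exact (Finset.mem_filter.mp (h3 x hx' y hy')).1
        · rw [Finset.mem_singleton.mp hx']
          exact (Finset.mem_filter.mp (h2 hy')).2
      · exact Finset.disjoint_singleton_left.mpr (Finset.notMem_erase _ _)
      · exact Finset.disjoint_empty_left _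
    refine hinj.trans (ncard_BC_le_g (L.erase u) Nu _
      (hdisj.mono (Finset.erase_subset _ _) hNuR) ?_ _ ?_)
    · intro p hp
      obtain ⟨-, h1, h2⟩ := Finset.mem_filter.mp hp
      exact Finset.mem_product.mpr ⟨h1, h2⟩
    · have := Finset.card_erase_of_mem hu
      omega
  -- bound for S3
  have hb3 : S3.ncard ≤ g (L.card + R.card - 2) := by
    have hinj : S3.ncard ≤
        (BC Nv (R.erase v) (E.filter (fun p => p.1 ∈ Nv ∧ p.2 ∈ R.erase v))).ncard := by
      apply generic_inj L R Nv (R.erase v) E _ ∅ {v}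
      · rintro ⟨X, Y⟩ hB
        obtain ⟨hΥm, hXu, hYv⟩ := hB
        have hmaxB : IsMaximalBiclique L R E (X, Y) := classE2 _ hΥm hXu
        obtain ⟨⟨hbX, hbY, hbe⟩, -⟩ := hmaxB
        have hsubX : X \ ∅ ⊆ Nv := by
          intro x hx
          rw [Finset.sdiff_empty] at hx
          exact Finset.mem_filter.mpr ⟨hbX hx, hbe x hx v hYv⟩
        have hsubY : Y \ {v} ⊆ R.erase v := by
          intro y hy
          obtain ⟨hy1, hy2⟩ := Finset.mem_sdiff.mp hy
          rw [Finset.mem_singleton] at hy2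
          exact Finset.mem_erase.mpr ⟨hy2, hbY hy1⟩
        refine ⟨classE2 _ hΥm hXu, Finset.empty_subset _,
          Finset.singleton_subset_iff.mpr hYv, hsubX, hsubY, ?_⟩
        intro x hx y hy
        have hx' : x ∈ X := by rw [Finset.sdiff_empty] at hx; exact hx
        exact Finset.mem_filter.mpr
          ⟨hbe x hx' y (Finset.mem_sdiff.mp hy).1, hsubX hx, hsubY hy⟩
      · rintro X' Y' ⟨h1, h2, h3⟩
        refine ⟨Finset.union_subset (h1.trans hNvL) (Finset.empty_subset _),
          Finset.union_subset (h2.trans (Finset.erase_subset _ _))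
          (Finset.singleton_subset_iff.mpr hv), ?_⟩
        intro x hx y hy
        have hx' : x ∈ X' := by
          rcases Finset.mem_union.mp hx with h | h
          · exact h
          · exact absurd h (Finset.notMem_empty x)
        rcases Finset.mem_union.mp hy with hy' | hy'
        · exact (Finset.mem_filter.mp (h3 x hx' y hy')).1
        · rw [Finset.mem_singleton.mp hy']
          exact (Finset.mem_filter.mp (h1 hx')).2
      · exact Finset.disjoint_empty_left _
      · exact Finset.disjoint_singleton_left.mpr (Finset.notMem_erase _ _)
    refine hinj.trans (ncard_BC_le_g Nv (R.erase v) _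
      (hdisj.mono hNvL (Finset.erase_subset _ _)) ?_ _ ?_)
    · intro p hp
      obtain ⟨-, h1, h2⟩ := Finset.mem_filter.mp hp
      exact Finset.mem_product.mpr ⟨h1, h2⟩
    · have := Finset.card_erase_of_mem hv
      omega
  have hSfin : (S1 ∪ S2 ∪ S3).Finite :=
    ((hΥfin.subset (fun B hB => hB.1)).union (hΥfin.subset (fun B hB => hB.1))).union
      (hΥfin.subset (fun B hB => hB.1))
  calc Υ.ncard ≤ (S1 ∪ S2 ∪ S3).ncard := Set.ncard_le_ncard hcover hSfin
    _ ≤ S1.ncard + S2.ncard + S3.ncard :=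
        le_trans (Set.ncard_union_le _ _) (add_le_add_left (Set.ncard_union_le _ _) _)
    _ ≤ 3 * g (L.card + R.card - 2) := by omega
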